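/- Let ⊙ be a pseudo-multiplication on [0,∞] and let φ denote the supremum of the set of ⊙-finite elements. Then there do not exist t < φ and t' > φ such that t ⊙ t' = φ. -/

import Mathlib

/-!
The supremum `φ` of the `⊙`-finite elements is always `0` or `∞`.
Finiteness is inherited downwards, so everything below `φ` is finite, and a product `r ⊙ w`
with `r > 0` and `w` not finite is not finite either (`s ⊙ (r ⊙ w) = (s ⊙ r) ⊙ w`), hence
`φ ≤ r ⊙ w`. If `0 < φ < v < ∞`, then every `s ⊙ v` with `s > 0` is at least `φ`, so
`s ⊙ (v ⊙ z) ≥ φ ⊙ z > 0` for `z > 0`: no `v ⊙ z` is finite, i.e. `v ⊙ z ≥ φ`. This contradicts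
the continuity of `z ↦ v ⊙ z` at `0`, where it vanishes.
-/

open scoped ENNReal
open Set

/-- A pseudo-multiplication on `[0,∞]`: associative, monotone in each argument,
continuous on `(0,∞) × [0,∞]`, with `s ↦ s ⊙ t` continuous on `(0,∞]`,
admitting a left identity, without zero divisors, and with `0` as annihilator. -/
structure PseudoMul where
  op : ℝ≥0∞ → ℝ≥0∞ → ℝ≥0∞
  assoc : ∀ a b c, op (op a b) c = op a (op b c)
  mono_left : ∀ t, Monotone fun s => op s t
  mono_right : ∀ s, Monotone fun t => op s t
  continuousOn : ContinuousOn (fun p : ℝ≥0∞ × ℝ≥0∞ => op p.1 p.2) (Ioo 0 ⊤ ×ˢ univ)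
  continuousOn_left : ∀ t, ContinuousOn (fun s => op s t) (Ioi 0)
  one : ℝ≥0∞
  one_op : ∀ t, op one t = t
  no_zero_divisors : ∀ s t, op s t = 0 → s = 0 ∨ t = 0
  zero_op : ∀ t, op 0 t = 0
  op_zero : ∀ t, op t 0 = 0

/-- An element `t` is `⊙`-finite if `⨅_{s>0} s ⊙ t = 0`. -/
def PseudoMul.OFinite (P : PseudoMul) (t : ℝ≥0∞) : Prop :=
  ⨅ s ∈ Ioi (0 : ℝ≥0∞), P.op s t = 0

/-- `⊙` is non-degenerate if its left identity is `⊙`-finite. -/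
def PseudoMul.Nondegenerate (P : PseudoMul) : Prop :=
  P.OFinite P.one

open scoped Topology
open Filter

namespace PseudoMul

variable (P : PseudoMul)

theorem op_pos {s t : ℝ≥0∞} (hs : 0 < s) (ht : 0 < t) : 0 < P.op s t := by
  refine pos_iff_ne_zero.mpr fun h => ?_
  rcases P.no_zero_divisors s t h with h | h
  · exact hs.ne' h
  · exact ht.ne' h

variable {P} in
theorem OFinite.mono {a b : ℝ≥0∞} (ha : P.OFinite a) (hba : b ≤ a) : P.OFinite b :=
  le_antisymm ((iInf₂_mono fun s _ => P.mono_right s hba).trans ha.le) bot_le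

variable {P} in
theorem OFinite.of_op {r w : ℝ≥0∞} (hr : 0 < r) (hrw : P.OFinite (P.op r w)) : P.OFinite w := by
  refine le_antisymm (le_trans ?_ hrw.le) bot_le
  refine le_iInf₂ fun s hs => ?_
  rw [← P.assoc]
  exact iInf₂_le (P.op s r) (P.op_pos hs hr)

theorem oFinite_of_lt_sSup {y : ℝ≥0∞} (hy : y < sSup {t | P.OFinite t}) : P.OFinite y := by
  obtain ⟨a, ha, hya⟩ := lt_sSup_iff.mp hy
  exact ha.mono hya.le

theorem sSup_oFinite_le_op {r w : ℝ≥0∞} (hr : 0 < r) (hw : ¬ P.OFinite w) :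
    sSup {t | P.OFinite t} ≤ P.op r w :=
  not_lt.mp fun h => hw ((P.oFinite_of_lt_sSup h).of_op hr)

theorem tendsto_op_zero {v : ℝ≥0∞} (hv₀ : 0 < v) (hv : v < ⊤) :
    Tendsto (P.op v) (𝓝 0) (𝓝 0) := by
  have hopen : IsOpen (Ioo (0 : ℝ≥0∞) ⊤ ×ˢ (univ : Set ℝ≥0∞)) := isOpen_Ioo.prod isOpen_univ
  have hcont : ContinuousAt (fun p : ℝ≥0∞ × ℝ≥0∞ => P.op p.1 p.2) (v, 0) :=
    P.continuousOn.continuousAt (hopen.mem_nhds ⟨⟨hv₀, hv⟩, mem_univ _⟩)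
  simpa only [Function.comp_def, P.op_zero] using
    (hcont.comp (Continuous.prodMk_right v).continuousAt).tendsto

theorem sSup_oFinite_le_op_of_lt {v z : ℝ≥0∞} (hv : sSup {t | P.OFinite t} < v) (hz : 0 < z) :
    sSup {t | P.OFinite t} ≤ P.op v z := by
  set φ := sSup {t | P.OFinite t}
  by_contra! h
  have hφ₀ : 0 < φ := lt_of_le_of_lt bot_le h
  have hv_fin : ¬ P.OFinite v := fun hfin => hv.not_ge (le_sSup hfin)
  have hle : P.op φ z ≤ ⨅ s ∈ Ioi (0 : ℝ≥0∞), P.op s (P.op v z) := by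
    refine le_iInf₂ fun s hs => ?_
    rw [← P.assoc]
    exact P.mono_left z (P.sSup_oFinite_le_op hs hv_fin)
  rw [P.oFinite_of_lt_sSup h] at hle
  exact (P.op_pos hφ₀ hz).ne' (le_antisymm hle bot_le)

theorem sSup_oFinite_eq_zero_or_eq_top :
    sSup {t | P.OFinite t} = 0 ∨ sSup {t | P.OFinite t} = ⊤ := by
  set φ := sSup {t | P.OFinite t}
  by_contra! h
  obtain ⟨v, hφv, hv⟩ := exists_between (lt_top_iff_ne_top.mpr h.2)
  have hφ₀ : 0 < φ := pos_iff_ne_zero.mpr h.1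
  have hsmall : ∀ᶠ z in 𝓝[>] (0 : ℝ≥0∞), P.op v z < φ :=
    ((P.tendsto_op_zero (hφ₀.trans hφv) hv).eventually (gt_mem_nhds hφ₀)).filter_mono
      nhdsWithin_le_nhds
  obtain ⟨z, hzφ, hz₀⟩ := (hsmall.and self_mem_nhdsWithin).exists
  exact hzφ.not_ge (P.sSup_oFinite_le_op_of_lt hφv hz₀)

end PseudoMul

/-- If `φ` is the supremum of the set of `⊙`-finite elements, there are no
`t < φ` and `t' > φ` with `t ⊙ t' = φ`. -/
theorem no_decomposition_of_phi (P : PseudoMul) (φ : ℝ≥0∞)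
    (hφ : φ = sSup {t : ℝ≥0∞ | P.OFinite t}) :
    ¬ ∃ t t' : ℝ≥0∞, t < φ ∧ φ < t' ∧ P.op t t' = φ := by
  rintro ⟨t, t', ht, ht', -⟩
  rcases hφ ▸ P.sSup_oFinite_eq_zero_or_eq_top with rfl | rfl
  · exact not_lt_zero ht
  · exact not_top_lt ht'
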